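/- For any n-Smullyan model M, the property mG1+ (for any M-predicate H satisfying Φ(H) ∩ Sent_M^+ ⊆ True_M^+, there exists S ∈ Sent_M^+ such that M ⊨ S and S ∉ Φ(H)) is equivalent to the property G1+ (for any M-predicate H satisfying Φ(H) ∩ Sent_M^+ ⊆ True_M^+, there exists S ∈ Sent_M^+ such that S ∉ Φ(H) and nS ∉ Φ(H)). -/

import Mathlib

/-- A Smullyan model over a set of symbols `α`: a set `pred` of predicates
(finite strings over `α`) satisfying the prefix-freeness requirement (†), together
with a naming function `phi` assigning a set of strings to each string
(only its values on `pred` are relevant). -/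
structure SmullyanModel (α : Type) where
  pred : Set (List α)
  prefixFree : ∀ H ∈ pred, ∀ X : List α, X ≠ [] → H ++ X ∉ pred
  phi : List α → Set (List α)

namespace SmullyanModel

variable {α : Type} (M : SmullyanModel α)

/-- The set of `M`-sentences: strings of the form `H ++ X` with `H` a predicate. -/
def sent : Set (List α) := {S | ∃ H ∈ M.pred, ∃ X : List α, S = H ++ X}

/-- `Sent_M^+ = Sent_M \ Pred_M`. -/
def sentPlus : Set (List α) := M.sent \ M.pred

/-- `True_M`: the set of true `M`-sentences. -/
def trueSet : Set (List α) := {S | ∃ H ∈ M.pred, ∃ X ∈ M.phi H, S = H ++ X}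

/-- `True_M^+ = True_M \ Pred_M`. -/
def truePlus : Set (List α) := M.trueSet \ M.pred

/-- `False_M = Sent_M \ True_M`. -/
def falseSet : Set (List α) := M.sent \ M.trueSet

/-- `False_M^+ = Sent_M^+ \ True_M^+`. -/
def falsePlus : Set (List α) := M.sentPlus \ M.truePlus

/-- `M ⊨ S`. -/
def Sat (S : List α) : Prop := S ∈ M.trueSet

/-- `S ∈ Sent_M^+` is an `M`-fixed point of `H` if `M ⊨ S ↔ M ⊨ HS`. -/
def IsFixedPoint (H S : List α) : Prop :=
  S ∈ M.sentPlus ∧ (M.Sat S ↔ M.Sat (H ++ S))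

/-- `M` is an `n`-Smullyan model (with negation symbol `n : α`):
for every predicate `H`, `nH` is a predicate and `Φ(nH) = Σ* \ Φ(H)`. -/
def IsNModel (n : α) : Prop :=
  ∀ H ∈ M.pred, (n :: H) ∈ M.pred ∧ M.phi (n :: H) = {X : List α | X ∉ M.phi H}

/-- `M` is an `r`-Smullyan model (with repeat symbol `r : α`):
for every predicate `H`, `rH` is a predicate and `Φ(rH) = {K ∈ Pred : KK ∈ Φ(H)}`. -/
def IsRModel (r : α) : Prop :=
  ∀ H ∈ M.pred, (r :: H) ∈ M.pred ∧
    M.phi (r :: H) = {K : List α | K ∈ M.pred ∧ K ++ K ∈ M.phi H}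

/-- FPT: every `M`-predicate has an `M`-fixed point. -/
def FPT : Prop := ∀ H ∈ M.pred, ∃ S : List α, M.IsFixedPoint H S

/-- T-Tarski: no `M`-predicate names `True_M`. -/
def TTarski : Prop := ¬ ∃ H ∈ M.pred, M.phi H = M.trueSet

/-- F-Tarski: no `M`-predicate names `False_M`. -/
def FTarski : Prop := ¬ ∃ H ∈ M.pred, M.phi H = M.falseSet

/-- T-Tarski⁺: there is no `M`-predicate `H` with `True_M⁺ = Φ(H) ∩ Sent_M⁺`. -/
def TTarskiPlus : Prop := ¬ ∃ H ∈ M.pred, M.truePlus = M.phi H ∩ M.sentPlus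

/-- F-Tarski⁺: there is no `M`-predicate `H` with `False_M⁺ = Φ(H) ∩ Sent_M⁺`. -/
def FTarskiPlus : Prop := ¬ ∃ H ∈ M.pred, M.falsePlus = M.phi H ∩ M.sentPlus

/-- mG1. -/
def MG1 : Prop :=
  ∀ H ∈ M.pred, M.phi H ⊆ M.trueSet →
    ∃ S ∈ M.sent, M.Sat S ∧ S ∉ M.phi H

/-- mG1⁺. -/
def MG1Plus : Prop :=
  ∀ H ∈ M.pred, M.phi H ∩ M.sentPlus ⊆ M.truePlus →
    ∃ S ∈ M.sentPlus, M.Sat S ∧ S ∉ M.phi H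

/-- G1 (for `n`-Smullyan models). -/
def G1 (n : α) : Prop :=
  ∀ H ∈ M.pred, M.phi H ⊆ M.trueSet →
    ∃ S ∈ M.sent, S ∉ M.phi H ∧ (n :: S) ∉ M.phi H

/-- G1⁺ (for `n`-Smullyan models). -/
def G1Plus (n : α) : Prop :=
  ∀ H ∈ M.pred, M.phi H ∩ M.sentPlus ⊆ M.truePlus →
    ∃ S ∈ M.sentPlus, S ∉ M.phi H ∧ (n :: S) ∉ M.phi H

/-- The predicate set of a simple model: strings `X♯` where `X` contains no `♯`. -/
def simplePred (sharp : α) : Set (List α) :=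
  {L | ∃ X : List α, sharp ∉ X ∧ L = X ++ [sharp]}

end SmullyanModel

/-!
By prefix-freeness a sentence `HX` decomposes uniquely, so `M ⊨ HX ↔ X ∈ Φ(H)`. Hence in an
`n`-model, `nS` lies in `Sent⁺` whenever `S` does, and is true exactly when `S` is false.
So if `H` is sound on `Sent⁺`, a true `S ∉ Φ(H)` also has `nS ∉ Φ(H)` (as `nS` is false), and
conversely of two witnesses `S, nS ∉ Φ(H)` one is true.
-/

namespace SmullyanModel

variable {α : Type} {M : SmullyanModel α}

lemma eq_of_prefix_of_mem_pred {H K : List α} (hH : H ∈ M.pred) (hK : K ∈ M.pred)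
    (h : H <+: K) : H = K := by
  obtain ⟨t, rfl⟩ := h
  rcases eq_or_ne t [] with rfl | ht
  · exact (List.append_nil H).symm
  · exact absurd hK (M.prefixFree H hH t ht)

lemma append_inj_of_mem_pred {H K X Y : List α} (hH : H ∈ M.pred) (hK : K ∈ M.pred)
    (h : H ++ X = K ++ Y) : H = K ∧ X = Y := by
  have hHK : H = K := by
    rcases List.prefix_or_prefix_of_prefix (h ▸ List.prefix_append H X)
        (List.prefix_append K Y) with hp | hp
    · exact eq_of_prefix_of_mem_pred hH hK hp
    · exact (eq_of_prefix_of_mem_pred hK hH hp).symm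
  subst hHK
  exact ⟨rfl, List.append_cancel_left h⟩

lemma sat_append_iff {H X : List α} (hH : H ∈ M.pred) :
    M.Sat (H ++ X) ↔ X ∈ M.phi H := by
  constructor
  · rintro ⟨K, hK, Y, hY, hEq⟩
    obtain ⟨rfl, rfl⟩ := append_inj_of_mem_pred hH hK hEq
    exact hY
  · exact fun hX => ⟨H, hH, X, hX, rfl⟩

lemma exists_append_of_mem_sentPlus {S : List α} (hS : S ∈ M.sentPlus) :
    ∃ K ∈ M.pred, ∃ X : List α, X ≠ [] ∧ S = K ++ X := by
  obtain ⟨⟨K, hK, X, rfl⟩, hnp⟩ := hS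
  refine ⟨K, hK, X, ?_, rfl⟩
  rintro rfl
  exact hnp (by simpa using hK)

namespace IsNModel

variable {n : α} {S : List α}

lemma cons_mem_sentPlus (hn : M.IsNModel n) (hS : S ∈ M.sentPlus) :
    n :: S ∈ M.sentPlus := by
  obtain ⟨K, hK, X, hX, rfl⟩ := exists_append_of_mem_sentPlus hS
  have hnK := (hn K hK).1
  exact ⟨⟨n :: K, hnK, X, rfl⟩, M.prefixFree (n :: K) hnK X hX⟩

lemma sat_cons_iff (hn : M.IsNModel n) (hS : S ∈ M.sentPlus) :
    M.Sat (n :: S) ↔ ¬ M.Sat S := by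
  obtain ⟨K, hK, X, -, rfl⟩ := exists_append_of_mem_sentPlus hS
  obtain ⟨hnK, hphi⟩ := hn K hK
  rw [sat_append_iff hK, ← List.cons_append, sat_append_iff hnK, hphi]
  rfl

lemma g1Plus_of_mg1Plus (hn : M.IsNModel n) (hm : M.MG1Plus) : M.G1Plus n := by
  intro H hH hsound
  obtain ⟨S, hS, hsat, hnot⟩ := hm H hH hsound
  refine ⟨S, hS, hnot, fun hnS => ?_⟩
  have hnS_true : n :: S ∈ M.truePlus := hsound ⟨hnS, hn.cons_mem_sentPlus hS⟩
  exact (hn.sat_cons_iff hS).mp hnS_true.1 hsat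

lemma mg1Plus_of_g1Plus (hn : M.IsNModel n) (hg : M.G1Plus n) : M.MG1Plus := by
  intro H hH hsound
  obtain ⟨S, hS, hnot, hnnot⟩ := hg H hH hsound
  by_cases hsat : M.Sat S
  · exact ⟨S, hS, hsat, hnot⟩
  · exact ⟨n :: S, hn.cons_mem_sentPlus hS, (hn.sat_cons_iff hS).mpr hsat, hnnot⟩

end IsNModel

end SmullyanModel

theorem stmt_10_general {α : Type} (M : SmullyanModel α) (n : α)
    (hn : M.IsNModel n) :
    M.MG1Plus ↔ M.G1Plus n :=
  ⟨hn.g1Plus_of_mg1Plus, hn.mg1Plus_of_g1Plus⟩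

/-- mG1⁺ and G1⁺ are equivalent for any `n`-Smullyan model. -/
theorem stmt_10 {α : Type} [Nonempty α] (M : SmullyanModel α) (n : α)
    (hn : M.IsNModel n) :
    M.MG1Plus ↔ M.G1Plus n :=
  stmt_10_general M n hn
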